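/- Let $V$ be a finite-dimensional vector space over a field $k$ ($k = \mathbb{Q}$ or $\mathbb{C}$), $V_0,\ldots,V_r \subseteq V$ subspaces, and $K$ the kernel of the summation map $V_0 \oplus \cdots \oplus V_r \to V$. Assume that for general $(m_0,\ldots,m_r) \in K$ and any two indices $i,j$ one has $\langle m_l \mid 0 \le l \le r,\ l \neq i,j \rangle_k = \langle m_0,\ldots,m_r\rangle_k$. Then there exists a subspace $V' \subseteq V$ of dimension $\alpha(V_0,\ldots,V_r)$ such that: (1) for the quotient map $q: V \to V/V'$, the subspace $q(V_0) + \cdots + q(V_r)$ of $V/V'$ is the internal direct sum of the $q(V_i)$; and (2) whenever $\tilde q: V \to \tilde V$ is a linear map such that $\tilde q(V_0) + \cdots + \tilde q(V_r)$ is the internal direct sum of the $\tilde q(V_i)$, then $V' \subseteq \ker \tilde q$. -/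
import Mathlib


open Module

/-- The subalgebra of polynomial functions on a module: generated by linear functionals. -/
noncomputable def polyFunctions (k M : Type*) [CommRing k] [AddCommGroup M] [Module k M] :
    Subalgebra k (M → k) :=
  Algebra.adjoin k (Set.range fun φ : Module.Dual k M => (φ : M → k))

/-- The dimension of the span of a finite family of vectors. -/
noncomputable def spanDim (k : Type*) {V : Type*} [DivisionRing k] [AddCommGroup V] [Module k V]
    {r : ℕ} (m : Fin (r + 1) → V) : ℕ :=
  finrank k (Submodule.span k (Set.range m))

/-- The kernel `K` of the summation map `V₀ ⊕ ⋯ ⊕ V_r → V`, realized inside `Π i, V`. -/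
noncomputable def kerSum (k : Type*) {V : Type*} [Field k] [AddCommGroup V] [Module k V]
    {r : ℕ} (Vs : Fin (r + 1) → Submodule k V) : Submodule k (Fin (r + 1) → V) :=
  (⨅ i, (Vs i).comap (LinearMap.proj i)) ⊓
    LinearMap.ker (∑ i, (LinearMap.proj i : (Fin (r + 1) → V) →ₗ[k] V))

/-- Membership in `kerSum`. -/
lemma mem_kerSum {k V : Type*} [Field k] [AddCommGroup V] [Module k V] {r : ℕ}
    (Vs : Fin (r + 1) → Submodule k V) (w : Fin (r + 1) → V) :
    w ∈ kerSum k Vs ↔ (∀ i, w i ∈ Vs i) ∧ ∑ i, w i = 0 := by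
  simp [kerSum, Submodule.mem_iInf, LinearMap.sum_apply]

/-- A polynomial function restricted to a line is a (one-variable) polynomial. -/
lemma polyFunctions_on_line {k M : Type*} [CommRing k] [AddCommGroup M] [Module k M]
    {f : M → k} (hf : f ∈ polyFunctions k M) (a b : M) :
    ∃ p : Polynomial k, ∀ s : k, f (a + s • b) = p.eval s := by
  have hf' : f ∈ Algebra.adjoin k (Set.range fun φ : Module.Dual k M => (φ : M → k)) := hf
  clear hf
  induction hf' using Algebra.adjoin_induction with
  | mem g hg =>
    obtain ⟨φ, rfl⟩ := hg
    refine ⟨Polynomial.C (φ a) + Polynomial.X * Polynomial.C (φ b), fun s => ?_⟩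
    show (φ : M → k) (a + s • b)
      = Polynomial.eval s (Polynomial.C (φ a) + Polynomial.X * Polynomial.C (φ b))
    rw [map_add, map_smul]
    simp only [Polynomial.eval_add, Polynomial.eval_mul, Polynomial.eval_C,
      Polynomial.eval_X, smul_eq_mul]
  | algebraMap r =>
    exact ⟨Polynomial.C r, fun s => by simp [Pi.algebraMap_apply]⟩
  | add g h hg hh ihg ihh =>
    obtain ⟨p, hp⟩ := ihg; obtain ⟨q, hq⟩ := ihh
    exact ⟨p + q, fun s => by simp [hp s, hq s]⟩
  | mul g h hg hh ihg ihh =>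
    obtain ⟨p, hp⟩ := ihg; obtain ⟨q, hq⟩ := ihh
    exact ⟨p * q, fun s => by simp [hp s, hq s]⟩

/-- Extract coefficients from membership in the span of a subfamily omitting indices `m, j`. -/
lemma exists_coeffs {k V : Type*} [Field k] [AddCommGroup V] [Module k V] {n : ℕ}
    (z : Fin n → V) (m j : Fin n)
    (h : z m ∈ Submodule.span k (z '' {l | l ≠ m ∧ l ≠ j})) :
    ∃ c : Fin n → k, c m = 0 ∧ c j = 0 ∧ z m = ∑ l, c l • z l := by
  classical
  rw [Finsupp.mem_span_image_iff_linearCombination] at h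
  obtain ⟨c, hc, hsum⟩ := h
  rw [Finsupp.mem_supported] at hc
  have hcm : c m = 0 := by
    by_contra hne
    have : m ∈ {l : Fin n | l ≠ m ∧ l ≠ j} := hc (Finsupp.mem_support_iff.2 hne)
    exact this.1 rfl
  have hcj : c j = 0 := by
    by_contra hne
    have : j ∈ {l : Fin n | l ≠ m ∧ l ≠ j} := hc (Finsupp.mem_support_iff.2 hne)
    exact this.2 rfl
  refine ⟨fun l => c l, hcm, hcj, ?_⟩
  rw [← hsum, Finsupp.linearCombination_apply,
    Finsupp.sum_fintype _ _ (fun i => zero_smul k (z i))]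

section Main

variable {k V : Type*} [Field k] [Infinite k] [AddCommGroup V] [Module k V]
    {r : ℕ} {Vs : Fin (r + 1) → Submodule k V}

/-- The key lemma: if `f` is a nonzero polynomial function witnessing the removal condition
and `f x ≠ 0`, then every coordinate of every element of `K` lies in the span of the
coordinates of `x`. -/
lemma coord_mem_span {f : ↥(kerSum k Vs) → k} (hf : f ∈ polyFunctions k ↥(kerSum k Vs))
    (hrem : ∀ x : kerSum k Vs, f x ≠ 0 → ∀ i j : Fin (r + 1),
      Submodule.span k ((x : Fin (r + 1) → V) '' {l | l ≠ i ∧ l ≠ j}) =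
        Submodule.span k (Set.range (x : Fin (r + 1) → V)))
    (x : kerSum k Vs) (hx : f x ≠ 0)
    {y : Fin (r + 1) → V} (hy : y ∈ kerSum k Vs) (m : Fin (r + 1)) :
    y m ∈ Submodule.span k (Set.range (x : Fin (r + 1) → V)) := by
  classical
  set V' := Submodule.span k (Set.range (x : Fin (r + 1) → V)) with hV'
  have hxmem : ∀ l, (x : Fin (r + 1) → V) l ∈ V' :=
    fun l => Submodule.subset_span (Set.mem_range_self l)
  -- main induction: we can find η ∈ K with η m = y m and η l ∈ V' for all l ∈ S, l ≠ m
  have key : ∀ S : Finset (Fin (r + 1)), ∃ η : kerSum k Vs,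
      (η : Fin (r + 1) → V) m = y m ∧
      ∀ l ∈ S, l ≠ m → (η : Fin (r + 1) → V) l ∈ V' := by
    intro S
    induction S using Finset.induction_on with
    | empty => exact ⟨⟨y, hy⟩, rfl, fun l hl => absurd hl (Finset.notMem_empty l)⟩
    | @insert j' S hjS ih =>
      obtain ⟨η, hηm, hηS⟩ := ih
      by_cases hjm : j' = m
      · refine ⟨η, hηm, fun l hl hlm => ?_⟩
        rcases Finset.mem_insert.1 hl with rfl | hl
        · exact absurd hjm hlm
        · exact hηS l hl hlm
      -- the generic line construction
      obtain ⟨p, hp⟩ := polyFunctions_on_line hf x η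
      have hp0 : p ≠ 0 := by
        intro h
        apply hx
        have h0 := hp 0
        simp only [zero_smul, add_zero] at h0
        rw [h0, h, Polynomial.eval_zero]
      have hinf : Set.Infinite {s : k | p.IsRoot s}ᶜ :=
        Set.Finite.infinite_compl (Polynomial.finite_setOf_isRoot hp0)
      obtain ⟨s, hs, s', hs', hss⟩ := Set.Infinite.nontrivial hinf
      -- construct, for a good parameter t, an element v(t) ∈ K
      have build : ∀ t : k, t ∈ {s : k | p.IsRoot s}ᶜ →
          ∃ v : kerSum k Vs,
            (v : Fin (r + 1) → V) m
              = (x : Fin (r + 1) → V) m + t • (η : Fin (r + 1) → V) m ∧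
            (v : Fin (r + 1) → V) j' = 0 ∧
            ∀ l, l ≠ m → ∃ d : k,
              (v : Fin (r + 1) → V) l
                = d • ((x : Fin (r + 1) → V) l + t • (η : Fin (r + 1) → V) l) := by
        intro t ht
        set z : kerSum k Vs := x + t • η with hzdef
        have hzc : ∀ l, (z : Fin (r + 1) → V) l
            = (x : Fin (r + 1) → V) l + t • (η : Fin (r + 1) → V) l := fun l => rfl
        have hfz : f z ≠ 0 := by
          have : f z = p.eval t := hp t
          rw [this]
          exact ht
        have hsp := hrem z hfz m j'
        have hzm : (z : Fin (r + 1) → V) m ∈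
            Submodule.span k ((z : Fin (r + 1) → V) '' {l | l ≠ m ∧ l ≠ j'}) := by
          rw [hsp]
          exact Submodule.subset_span (Set.mem_range_self m)
        obtain ⟨c, hcm, hcj, hsum⟩ := exists_coeffs _ m j' hzm
        set v : Fin (r + 1) → V :=
          fun l => if l = m then (z : Fin (r + 1) → V) m
            else -(c l • (z : Fin (r + 1) → V) l) with hv
        have hvdef : ∀ l, v l = if l = m then (z : Fin (r + 1) → V) m
            else -(c l • (z : Fin (r + 1) → V) l) := fun l => rfl
        have hzK := z.2
        rw [mem_kerSum] at hzK
        have hvK : v ∈ kerSum k Vs := by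
          rw [mem_kerSum]
          refine ⟨fun l => ?_, ?_⟩
          · rw [hvdef l]
            by_cases hl : l = m
            · rw [if_pos hl, hl]; exact hzK.1 m
            · rw [if_neg hl]
              exact Submodule.neg_mem _ (Submodule.smul_mem _ _ (hzK.1 l))
          · have hsplit : ∑ l, v l = v m + ∑ l ∈ Finset.univ.erase m, v l :=
              (Finset.add_sum_erase Finset.univ v (Finset.mem_univ m)).symm
            have hvm : v m = (z : Fin (r + 1) → V) m := by rw [hvdef m, if_pos rfl]
            have hrwsum : ∑ l ∈ Finset.univ.erase m, v l
                = -∑ l ∈ Finset.univ.erase m, c l • (z : Fin (r + 1) → V) l := by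
              rw [← Finset.sum_neg_distrib]
              refine Finset.sum_congr rfl fun l hl => ?_
              rw [hvdef l, if_neg (Finset.ne_of_mem_erase hl)]
            have hfull : ∑ l ∈ Finset.univ.erase m, c l • (z : Fin (r + 1) → V) l
                = ∑ l, c l • (z : Fin (r + 1) → V) l := by
              rw [← Finset.add_sum_erase Finset.univ
                (fun l => c l • (z : Fin (r + 1) → V) l) (Finset.mem_univ m),
                hcm, zero_smul, zero_add]
            rw [hsplit, hvm, hrwsum, hfull, ← hsum, add_neg_cancel]
        refine ⟨⟨v, hvK⟩, ?_, ?_, ?_⟩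
        · show v m = _
          rw [hvdef m, if_pos rfl]; exact hzc m
        · show v j' = 0
          rw [hvdef j', if_neg hjm, hcj]
          simp
        · intro l hl
          refine ⟨-(c l), ?_⟩
          show v l = _
          rw [hvdef l, if_neg hl, ← hzc l, neg_smul]
      obtain ⟨v₁, hv₁m, hv₁j, hv₁⟩ := build s hs
      obtain ⟨v₂, hv₂m, hv₂j, hv₂⟩ := build s' hs'
      have hss' : s - s' ≠ 0 := sub_ne_zero.2 hss
      refine ⟨(s - s')⁻¹ • (v₁ - v₂), ?_, ?_⟩
      · show (s - s')⁻¹ • ((v₁ : Fin (r + 1) → V) m - (v₂ : Fin (r + 1) → V) m) = y m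
        rw [hv₁m, hv₂m, ← hηm,
          show (x : Fin (r + 1) → V) m + s • (η : Fin (r + 1) → V) m
            - ((x : Fin (r + 1) → V) m + s' • (η : Fin (r + 1) → V) m)
            = (s - s') • (η : Fin (r + 1) → V) m by rw [sub_smul]; abel,
          smul_smul, inv_mul_cancel₀ hss', one_smul]
      · intro l hl hlm
        show (s - s')⁻¹ • ((v₁ : Fin (r + 1) → V) l - (v₂ : Fin (r + 1) → V) l) ∈ V'
        rcases Finset.mem_insert.1 hl with rfl | hlS
        · rw [hv₁j, hv₂j, sub_zero, smul_zero]; exact Submodule.zero_mem _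
        · have hηl : (η : Fin (r + 1) → V) l ∈ V' := hηS l hlS hlm
          obtain ⟨d₁, hd₁⟩ := hv₁ l hlm
          obtain ⟨d₂, hd₂⟩ := hv₂ l hlm
          rw [hd₁, hd₂]
          refine Submodule.smul_mem _ _ (Submodule.sub_mem _ ?_ ?_) <;>
            exact Submodule.smul_mem _ _
              (Submodule.add_mem _ (hxmem l) (Submodule.smul_mem _ _ hηl))
  obtain ⟨η, hηm, hηl⟩ := key Finset.univ
  have hηK := η.2
  rw [mem_kerSum] at hηK
  have h0 := hηK.2
  rw [← Finset.add_sum_erase Finset.univ _ (Finset.mem_univ m)] at h0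
  have hm : (η : Fin (r + 1) → V) m
      = -∑ l ∈ Finset.univ.erase m, (η : Fin (r + 1) → V) l := by
    rw [eq_neg_iff_add_eq_zero]; exact h0
  rw [← hηm, hm]
  exact Submodule.neg_mem _ (Submodule.sum_mem _ fun l hl =>
    hηl l (Finset.mem_univ l) (Finset.ne_of_mem_erase hl))

end Main

theorem stmt3 {k V : Type*} [Field k] [Infinite k] [AddCommGroup V] [Module k V]
    [FiniteDimensional k V] {r : ℕ} (Vs : Fin (r + 1) → Submodule k V)
    (α : ℕ) (hα : IsGreatest { d | ∃ m ∈ kerSum k Vs, spanDim k m = d } α)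
    (hrem : ∃ f ∈ polyFunctions k ↥(kerSum k Vs), (∃ x : kerSum k Vs, f x ≠ 0) ∧
      ∀ x : kerSum k Vs, f x ≠ 0 → ∀ i j : Fin (r + 1),
        Submodule.span k ((x : Fin (r + 1) → V) '' {l | l ≠ i ∧ l ≠ j}) =
          Submodule.span k (Set.range (x : Fin (r + 1) → V))) :
    ∃ V' : Submodule k V, finrank k V' = α ∧
      (∀ w : Fin (r + 1) → V ⧸ V', (∀ i, w i ∈ (Vs i).map V'.mkQ) → ∑ i, w i = 0 →
        ∀ i, w i = 0) ∧
      (∀ (W : Type _) [AddCommGroup W] [Module k W] (qt : V →ₗ[k] W),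
        (∀ w : Fin (r + 1) → W, (∀ i, w i ∈ (Vs i).map qt) → ∑ i, w i = 0 → ∀ i, w i = 0) →
          V' ≤ LinearMap.ker qt) := by
  classical
  obtain ⟨f, hf, ⟨x, hx⟩, hrem'⟩ := hrem
  set V' := Submodule.span k (Set.range (x : Fin (r + 1) → V)) with hV'
  have hcoord : ∀ {y : Fin (r + 1) → V}, y ∈ kerSum k Vs → ∀ m, y m ∈ V' :=
    fun hy m => coord_mem_span hf hrem' x hx hy m
  have hxK := x.2
  rw [mem_kerSum] at hxK
  refine ⟨V', ?_, ?_, ?_⟩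
  · -- the dimension is α
    apply le_antisymm
    · exact hα.2 ⟨(x : Fin (r + 1) → V), x.2, rfl⟩
    · obtain ⟨m₀, hm₀K, hm₀⟩ := hα.1
      rw [← hm₀]
      apply Submodule.finrank_mono
      rw [Submodule.span_le]
      rintro _ ⟨l, rfl⟩
      exact hcoord hm₀K l
  · -- the images of the Vs i in V ⧸ V' form an internal direct sum
    intro w hw hwsum
    have hlift : ∀ i, ∃ v ∈ Vs i, V'.mkQ v = w i := fun i => Submodule.mem_map.1 (hw i)
    choose v hv hq using hlift
    have hsv : (∑ i, v i) ∈ V' := by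
      rw [← Submodule.ker_mkQ V', LinearMap.mem_ker, map_sum]
      simp_rw [hq]
      exact hwsum
    rw [hV'] at hsv
    obtain ⟨a, ha⟩ := (Submodule.mem_span_range_iff_exists_fun k).1 hsv
    have hyK : (fun l => v l - a l • (x : Fin (r + 1) → V) l) ∈ kerSum k Vs := by
      rw [mem_kerSum]
      refine ⟨fun i => Submodule.sub_mem _ (hv i) (Submodule.smul_mem _ _ (hxK.1 i)), ?_⟩
      rw [Finset.sum_sub_distrib, ha, sub_self]
    have hvV' : ∀ i, v i ∈ V' := by
      intro i
      have h1 := hcoord hyK i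
      have h2 : a i • (x : Fin (r + 1) → V) i ∈ V' :=
        Submodule.smul_mem _ _ (Submodule.subset_span (Set.mem_range_self i))
      have := Submodule.add_mem _ h1 h2
      simpa using this
    intro i
    rw [← hq i, Submodule.mkQ_apply, Submodule.Quotient.mk_eq_zero]
    exact hvV' i
  · -- V' is contained in the kernel of any qt for which the images form a direct sum
    intro W _ _ qt hqt
    rw [hV', Submodule.span_le]
    rintro _ ⟨l, rfl⟩
    rw [SetLike.mem_coe, LinearMap.mem_ker]
    exact hqt (fun i => qt ((x : Fin (r + 1) → V) i))
      (fun i => ⟨(x : Fin (r + 1) → V) i, hxK.1 i, rfl⟩)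
      (by rw [← map_sum, hxK.2, map_zero]) l
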